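/- Fix M ≥ 1, N_t ≥ 1, reals β_1,...,β_M > 0, δ_1,...,δ_M > 0, and Hermitian positive semidefinite complex N_t×N_t matrices A_1,...,A_M. Then the function f(R) = Σ_{m=1}^M (β_m · Re(tr(A_m R)) + δ_m)⁻¹ is a convex function (with respect to the real vector-space structure on complex N_t×N_t matrices) on the convex set of N_t×N_t complex positive semidefinite matrices. In particular, on this set each denominator satisfies β_m · Re(tr(A_m R)) + δ_m ≥ δ_m > 0. -/

import Mathlib

/-!
Each summand is `t ↦ t⁻¹`, convex on `(0, ∞)`, composed with the real-affine map
`R ↦ β_m Re tr(A_m R) + δ_m`, and a finite sum of convex functions is convex. The affine map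
is at least `δ_m > 0` on the positive semidefinite cone: writing `A = Cᴴ C`, the trace
`tr(A R) = tr(C R Cᴴ)` is the trace of a positive semidefinite matrix.
-/

open Matrix ComplexOrder

theorem ConvexOn.sum {𝕜 E β ι : Type*} [Semiring 𝕜] [PartialOrder 𝕜] [AddCommMonoid E]
    [AddCommMonoid β] [PartialOrder β] [IsOrderedAddMonoid β] [SMul 𝕜 E] [Module 𝕜 β]
    {s : Set E} (hs : Convex 𝕜 s) (t : Finset ι) {f : ι → E → β}
    (hf : ∀ i ∈ t, ConvexOn 𝕜 s (f i)) : ConvexOn 𝕜 s fun x => ∑ i ∈ t, f i x := by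
  classical
  induction t using Finset.induction_on with
  | empty => simpa using convexOn_const (0 : β) hs
  | insert a t ha ih =>
    simp_rw [Finset.sum_insert ha]
    exact (hf a (t.mem_insert_self a)).add (ih fun i hi => hf i (Finset.mem_insert_of_mem hi))

theorem convexOn_inv_comp_affineMap {E : Type*} [AddCommGroup E] [Module ℝ E]
    (g : E →ᵃ[ℝ] ℝ) {s : Set E} (hs : Convex ℝ s) (hg : ∀ x ∈ s, 0 < g x) :
    ConvexOn ℝ s fun x => (g x)⁻¹ := by
  simpa [Function.comp_def] using ((convexOn_zpow (-1)).comp_affineMap g).subset hg hs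

namespace Matrix

variable {n 𝕜 : Type*} [RCLike 𝕜]

theorem convex_setOf_posSemidef : Convex ℝ {A : Matrix n n 𝕜 | A.PosSemidef} :=
  fun _ hA _ hB _ _ ha hb _ => (hA.smul ha).add (hB.smul hb)

variable [Fintype n]

theorem PosSemidef.trace_mul_nonneg {A B : Matrix n n 𝕜} (hA : A.PosSemidef)
    (hB : B.PosSemidef) : 0 ≤ (A * B).trace := by
  classical
  open scoped MatrixOrder Matrix.Norms.L2Operator in
  obtain ⟨C, rfl⟩ := CStarAlgebra.nonneg_iff_eq_star_mul_self.mp hA.nonneg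
  rw [star_eq_conjTranspose, Matrix.mul_assoc, trace_mul_comm]
  exact (hB.mul_mul_conjTranspose_same C).trace_nonneg

theorem PosSemidef.re_trace_mul_nonneg {A B : Matrix n n 𝕜} (hA : A.PosSemidef)
    (hB : B.PosSemidef) : 0 ≤ RCLike.re (A * B).trace :=
  (RCLike.nonneg_iff.mp (hA.trace_mul_nonneg hB)).1

noncomputable def reTraceMulLeft (A : Matrix n n 𝕜) : Matrix n n 𝕜 →ₗ[ℝ] ℝ :=
  RCLike.reLm.comp ((traceLinearMap n ℝ 𝕜).comp (LinearMap.mulLeft ℝ A))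

@[simp]
theorem reTraceMulLeft_apply (A R : Matrix n n 𝕜) :
    reTraceMulLeft A R = RCLike.re (A * R).trace :=
  rfl

end Matrix

theorem stmt_6_general {M Nt : ℕ}
    (β δ : Fin M → ℝ) (hβ : ∀ m, 0 < β m) (hδ : ∀ m, 0 < δ m)
    (A : Fin M → Matrix (Fin Nt) (Fin Nt) ℂ) (hA : ∀ m, (A m).PosSemidef) :
    ConvexOn ℝ {R : Matrix (Fin Nt) (Fin Nt) ℂ | R.PosSemidef}
      (fun R => ∑ m, (β m * (Matrix.trace (A m * R)).re + δ m)⁻¹) ∧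
    ∀ R : Matrix (Fin Nt) (Fin Nt) ℂ, R.PosSemidef →
      ∀ m, 0 < δ m ∧ δ m ≤ β m * (Matrix.trace (A m * R)).re + δ m := by
  have hdenom : ∀ R : Matrix (Fin Nt) (Fin Nt) ℂ, R.PosSemidef → ∀ m,
      δ m ≤ β m * (A m * R).trace.re + δ m := fun R hR m => by
    have htrace := (hA m).re_trace_mul_nonneg hR
    rw [RCLike.re_to_complex] at htrace
    exact le_add_of_nonneg_left (mul_nonneg (hβ m).le htrace)
  refine ⟨ConvexOn.sum convex_setOf_posSemidef _ fun m _ => ?_,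
    fun R hR m => ⟨hδ m, hdenom R hR m⟩⟩
  let denom : Matrix (Fin Nt) (Fin Nt) ℂ →ᵃ[ℝ] ℝ :=
    (β m • reTraceMulLeft (A m)).toAffineMap + AffineMap.const ℝ _ (δ m)
  have hpos : ∀ R ∈ {R : Matrix (Fin Nt) (Fin Nt) ℂ | R.PosSemidef}, 0 < denom R :=
    fun R hR => (hδ m).trans_le (by simpa [denom] using hdenom R hR m)
  simpa [denom] using convexOn_inv_comp_affineMap denom convex_setOf_posSemidef hpos

/-- the objective of Problem (P1) is convex on the convex set of positive
semidefinite matrices, and each denominator is at least `δ_m > 0` there. -/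
theorem stmt_6 {M Nt : ℕ} (hM : 1 ≤ M) (hNt : 1 ≤ Nt)
    (β δ : Fin M → ℝ) (hβ : ∀ m, 0 < β m) (hδ : ∀ m, 0 < δ m)
    (A : Fin M → Matrix (Fin Nt) (Fin Nt) ℂ) (hA : ∀ m, (A m).PosSemidef) :
    ConvexOn ℝ {R : Matrix (Fin Nt) (Fin Nt) ℂ | R.PosSemidef}
      (fun R => ∑ m, (β m * (Matrix.trace (A m * R)).re + δ m)⁻¹) ∧
    ∀ R : Matrix (Fin Nt) (Fin Nt) ℂ, R.PosSemidef →
      ∀ m, 0 < δ m ∧ δ m ≤ β m * (Matrix.trace (A m * R)).re + δ m :=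
  stmt_6_general β δ hβ hδ A hA
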